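/- Every convex function g : ℝᵈ → ℝ ∪ {+∞} has an extended subgradient at every point x₀ of its effective domain: there exists a linear extended f : ℝᵈ → ℝ̄ with g(x) ≥ g(x₀) + f(x - x₀) for all x ∈ ℝᵈ. -/

import Mathlib

/-- A *linear extended function*: scaling and additivity whenever the sum is legal. -/
def IsLinExt {E : Type*} [AddCommGroup E] [Module ℝ E] (f : E → EReal) : Prop :=
  (∀ (α : ℝ) (x : E), f (α • x) = (α : EReal) * f x) ∧
  (∀ x x' : E, ¬ ((f x = ⊤ ∧ f x' = ⊥) ∨ (f x = ⊥ ∧ f x' = ⊤)) →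
    f (x + x') = f x + f x')

/-- An *affine extended function*: a horizontally and vertically shifted linear extended fn. -/
def IsAffExt {E : Type*} [AddCommGroup E] [Module ℝ E] (h : E → EReal) : Prop :=
  ∃ (f : E → EReal) (x₀ : E) (β : ℝ), IsLinExt f ∧ ∀ x, h x = f (x - x₀) + (β : EReal)

/-! Induction on the dimension. The point `(x₀, g x₀)` is not interior to the epigraph, so a
nonzero functional `ψ` on `E × ℝ` supports the epigraph there. If `ψ` is not vertical it gives an
ordinary affine minorant exact at `x₀`. If it is vertical, the effective domain lies in a
half-space `0 ≤ φ (x - x₀)` with `φ ≠ 0`; the restriction of `g` to the hyperplane `x₀ + ker φ`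
has an extended subgradient `f` by induction, and extending `f` by `⊥` on `0 < φ` and by `⊤` on
`φ < 0` (where `g = ⊤`) gives one for `g`. -/

section Extension

variable {E : Type*} [AddCommGroup E] [Module ℝ E]

lemma IsLinExt.map_zero {f : E → EReal} (hf : IsLinExt f) : f 0 = 0 := by
  simpa using hf.1 0 0

lemma isLinExt_coe_linearMap (v : E →ₗ[ℝ] ℝ) : IsLinExt fun x => (v x : EReal) :=
  ⟨fun α x => by simp [EReal.coe_mul], fun x x' _ => by simp [EReal.coe_add]⟩

noncomputable def extendFromKer (φ : E →ₗ[ℝ] ℝ) (f : LinearMap.ker φ → EReal) : E → EReal :=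
  fun x => if h : φ x = 0 then f ⟨x, h⟩ else if 0 < φ x then ⊥ else ⊤

variable {φ : E →ₗ[ℝ] ℝ} {f : LinearMap.ker φ → EReal}

lemma extendFromKer_of_eq_zero {x : E} (h : φ x = 0) : extendFromKer φ f x = f ⟨x, h⟩ :=
  dif_pos h

lemma extendFromKer_of_pos {x : E} (h : 0 < φ x) : extendFromKer φ f x = ⊥ := by
  rw [extendFromKer, dif_neg h.ne', if_pos h]

lemma extendFromKer_of_neg {x : E} (h : φ x < 0) : extendFromKer φ f x = ⊤ := by
  rw [extendFromKer, dif_neg h.ne, if_neg h.not_gt]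

lemma extendFromKer_smul (hf : IsLinExt f) (α : ℝ) (x : E) :
    extendFromKer φ f (α • x) = α * extendFromKer φ f x := by
  rcases eq_or_ne α 0 with rfl | hα
  · rw [zero_smul, extendFromKer_of_eq_zero (map_zero φ), EReal.coe_zero, zero_mul]
    exact hf.map_zero
  have hφ : φ (α • x) = α * φ x := by rw [map_smul, smul_eq_mul]
  rcases lt_trichotomy (φ x) 0 with hx | hx | hx
  · rw [extendFromKer_of_neg hx]
    rcases hα.lt_or_gt with hα | hα
    · rw [extendFromKer_of_pos (by nlinarith), EReal.coe_mul_top_of_neg hα]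
    · rw [extendFromKer_of_neg (by nlinarith), EReal.coe_mul_top_of_pos hα]
  · rw [extendFromKer_of_eq_zero hx, extendFromKer_of_eq_zero (by rw [hφ, hx, mul_zero])]
    exact hf.1 α ⟨x, hx⟩
  · rw [extendFromKer_of_pos hx]
    rcases hα.lt_or_gt with hα | hα
    · rw [extendFromKer_of_neg (by nlinarith), EReal.coe_mul_bot_of_neg hα]
    · rw [extendFromKer_of_pos (by nlinarith), EReal.coe_mul_bot_of_pos hα]

lemma extendFromKer_add (hf : IsLinExt f) (x x' : E)
    (hlegal : ¬ ((extendFromKer φ f x = ⊤ ∧ extendFromKer φ f x' = ⊥) ∨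
      (extendFromKer φ f x = ⊥ ∧ extendFromKer φ f x' = ⊤))) :
    extendFromKer φ f (x + x') = extendFromKer φ f x + extendFromKer φ f x' := by
  have hφ : φ (x + x') = φ x + φ x' := map_add φ x x'
  rcases lt_trichotomy (φ x) 0 with hx | hx | hx <;>
    rcases lt_trichotomy (φ x') 0 with hx' | hx' | hx'
  · rw [extendFromKer_of_neg hx, extendFromKer_of_neg hx', extendFromKer_of_neg (by linarith),
      EReal.top_add_top]
  · rw [extendFromKer_of_neg hx] at hlegal ⊢
    rw [extendFromKer_of_neg (x := x + x') (by linarith)]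
    exact (EReal.top_add_of_ne_bot fun h => hlegal (.inl ⟨rfl, h⟩)).symm
  · simp [extendFromKer_of_neg hx, extendFromKer_of_pos hx'] at hlegal
  · rw [extendFromKer_of_neg hx'] at hlegal ⊢
    rw [extendFromKer_of_neg (x := x + x') (by linarith)]
    exact (EReal.add_top_of_ne_bot fun h => hlegal (.inr ⟨h, rfl⟩)).symm
  · rw [extendFromKer_of_eq_zero hx, extendFromKer_of_eq_zero hx'] at hlegal ⊢
    rw [extendFromKer_of_eq_zero (by linarith)]
    exact hf.2 ⟨x, hx⟩ ⟨x', hx'⟩ hlegal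
  · rw [extendFromKer_of_pos hx', extendFromKer_of_pos (by linarith), EReal.add_bot]
  · simp [extendFromKer_of_pos hx, extendFromKer_of_neg hx'] at hlegal
  · rw [extendFromKer_of_pos hx, extendFromKer_of_pos (by linarith), EReal.bot_add]
  · rw [extendFromKer_of_pos hx, extendFromKer_of_pos (by linarith), EReal.bot_add]

lemma isLinExt_extendFromKer (hf : IsLinExt f) : IsLinExt (extendFromKer φ f) :=
  ⟨extendFromKer_smul hf, extendFromKer_add hf⟩

lemma add_extendFromKer_sub_le {g : E → EReal} {x₀ : E}
    (hker : ∀ k : LinearMap.ker φ, g x₀ + f k ≤ g (x₀ + k))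
    (hdom : ∀ x, g x ≠ ⊤ → 0 ≤ φ (x - x₀)) (x : E) :
    g x₀ + extendFromKer φ f (x - x₀) ≤ g x := by
  rcases lt_trichotomy (φ (x - x₀)) 0 with h | h | h
  · rw [not_imp_comm.1 (hdom x) h.not_ge]
    exact le_top
  · simpa [extendFromKer_of_eq_zero h] using hker ⟨x - x₀, h⟩
  · rw [extendFromKer_of_pos h, EReal.add_bot]
    exact bot_le

end Extension

lemma convex_epigraph_comp_affineMap {E F : Type*} [AddCommGroup E] [Module ℝ E]
    [AddCommGroup F] [Module ℝ F] {g : E → EReal}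
    (hconv : Convex ℝ {p : E × ℝ | g p.1 ≤ p.2}) (A : F →ᵃ[ℝ] E) :
    Convex ℝ {p : F × ℝ | g (A p.1) ≤ p.2} :=
  hconv.affine_preimage (A.prodMap (AffineMap.id ℝ ℝ))

lemma notMem_interior_epigraph {E : Type*} [TopologicalSpace E] {g : E → EReal} {x₀ : E}
    {c : ℝ} (hc : (c : EReal) ≤ g x₀) : (x₀, c) ∉ interior {p : E × ℝ | g p.1 ≤ p.2} := by
  intro h
  have hsub : (fun t : ℝ => (x₀, t)) ⁻¹' {p : E × ℝ | g p.1 ≤ p.2} ⊆ Set.Ici c :=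
    fun t ht => EReal.coe_le_coe_iff.1 (hc.trans ht)
  have hc' := interior_mono hsub <|
    preimage_interior_subset_interior_preimage (f := fun t : ℝ => (x₀, t)) (by fun_prop) h
  rw [interior_Ici] at hc'
  exact lt_irrefl c hc'

lemma LinearMap.map_prod_eq_add_mul {E : Type*} [AddCommGroup E] [Module ℝ E]
    (ψ : E × ℝ →ₗ[ℝ] ℝ) (x : E) (t : ℝ) : ψ (x, t) = ψ (x, 0) + t * ψ (0, 1) := by
  rw [← smul_eq_mul, ← map_smul, ← map_add, Prod.smul_mk, smul_zero, smul_eq_mul, mul_one,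
    Prod.mk_add_mk, add_zero, zero_add]

section FiniteDimensional

variable {E : Type*} [NormedAddCommGroup E] [NormedSpace ℝ E] [FiniteDimensional ℝ E]

lemma Convex.exists_ne_zero_le_of_notMem_interior {A : Set E} (hA : Convex ℝ A) {x : E}
    (hx : x ∈ A) (hxA : x ∉ interior A) :
    ∃ ψ : StrongDual ℝ E, ψ ≠ 0 ∧ ∀ a ∈ A, ψ a ≤ ψ x := by
  by_cases hint : (interior A).Nonempty
  · exact geometric_hahn_banach_of_nonempty_interior_point hA hxA hint
  have hdir : (affineSpan ℝ A).direction < ⊤ := by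
    rw [lt_top_iff_ne_top, Ne, AffineSubspace.direction_eq_top_iff_of_nonempty
      ⟨x, subset_affineSpan ℝ A hx⟩, ← hA.interior_nonempty_iff_affineSpan_eq_top]
    exact hint
  obtain ⟨φ, hφ, hker⟩ := Submodule.exists_le_ker_of_lt_top _ hdir
  refine ⟨LinearMap.toContinuousLinearMap φ, fun h => hφ ?_, fun a ha => ?_⟩
  · simpa using congrArg ContinuousLinearMap.toLinearMap h
  · have h : φ (a - x) = 0 := hker <|
      AffineSubspace.vsub_mem_direction (subset_affineSpan ℝ A ha) (subset_affineSpan ℝ A hx)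
    rw [map_sub, sub_eq_zero] at h
    simp [h]

theorem exists_subgradient_or_halfSpace {g : E → EReal} (hbot : ∀ x, g x ≠ ⊥)
    (hconv : Convex ℝ {p : E × ℝ | g p.1 ≤ p.2}) {x₀ : E} (hx₀ : g x₀ ≠ ⊤) :
    (∃ v : E →ₗ[ℝ] ℝ, ∀ x, g x₀ + v (x - x₀) ≤ g x) ∨
      ∃ φ : E →ₗ[ℝ] ℝ, φ ≠ 0 ∧ ∀ x, g x ≠ ⊤ → 0 ≤ φ (x - x₀) := by
  have hreal : ∀ x, g x ≠ ⊤ → ∃ t : ℝ, g x = t := fun x hx =>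
    ⟨(g x).toReal, (EReal.coe_toReal hx (hbot x)).symm⟩
  obtain ⟨c, hc⟩ := hreal x₀ hx₀
  obtain ⟨ψ, hψ0, hψ⟩ := hconv.exists_ne_zero_le_of_notMem_interior (x := (x₀, c))
    hc.le (notMem_interior_epigraph hc.ge)
  set ψ₁ := (ψ : E × ℝ →ₗ[ℝ] ℝ).comp (LinearMap.inl ℝ E ℝ)
  set s := ψ (0, 1)
  have hsupp : ∀ x (t : ℝ), g x ≤ t → ψ₁ (x - x₀) ≤ (c - t) * s := by
    intro x t ht
    have h := hψ (x, t) ht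
    have hx := LinearMap.map_prod_eq_add_mul (ψ : E × ℝ →ₗ[ℝ] ℝ) x t
    have hx₀ := LinearMap.map_prod_eq_add_mul (ψ : E × ℝ →ₗ[ℝ] ℝ) x₀ c
    simp only [ψ₁, map_sub, LinearMap.comp_apply, LinearMap.inl_apply]
    simp only [ContinuousLinearMap.coe_coe] at hx hx₀ ⊢
    linarith
  have hs : s ≤ 0 := by
    simpa using hsupp x₀ (c + 1) (by rw [hc]; exact EReal.coe_le_coe_iff.2 (by linarith))
  rcases hs.lt_or_eq with hs | hs
  · refine .inl ⟨(-s)⁻¹ • ψ₁, fun x => ?_⟩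
    by_cases hx : g x = ⊤
    · simp [hx]
    obtain ⟨t, ht⟩ := hreal x hx
    have hv : (-s)⁻¹ * ψ₁ (x - x₀) ≤ t - c :=
      (inv_mul_le_iff₀ (neg_pos.2 hs)).2 (by linarith [hsupp x t ht.le])
    rw [hc, ht, LinearMap.smul_apply, smul_eq_mul, ← EReal.coe_add, EReal.coe_le_coe_iff]
    linarith
  · refine .inr ⟨-ψ₁, fun h => hψ0 ?_, fun x hx => ?_⟩
    · refine ContinuousLinearMap.ext fun ⟨x, t⟩ => ?_
      have hx : ψ₁ x = 0 := by simpa using LinearMap.congr_fun h x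
      rw [← ContinuousLinearMap.coe_coe ψ, LinearMap.map_prod_eq_add_mul]
      simpa [ψ₁, s, hs] using hx
    · obtain ⟨t, ht⟩ := hreal x hx
      simpa [hs] using hsupp x t ht.le

theorem exists_isLinExt_minorant {g : E → EReal} (hbot : ∀ x, g x ≠ ⊥)
    (hconv : Convex ℝ {p : E × ℝ | g p.1 ≤ p.2}) {x₀ : E} (hx₀ : g x₀ ≠ ⊤) :
    ∃ f : E → EReal, IsLinExt f ∧ ∀ x, g x₀ + f (x - x₀) ≤ g x := by
  induction hn : Module.finrank ℝ E using Nat.strong_induction_on generalizing E g x₀ with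
  | _ n ih =>
  rcases exists_subgradient_or_halfSpace hbot hconv hx₀ with ⟨v, hv⟩ | ⟨φ, hφ, hdom⟩
  · exact ⟨_, isLinExt_coe_linearMap v, hv⟩
  have hrank : Module.finrank ℝ (LinearMap.ker φ) < n :=
    hn ▸ Submodule.finrank_lt (LinearMap.ker_eq_top.not.2 hφ)
  let A : LinearMap.ker φ →ᵃ[ℝ] E :=
    (AffineEquiv.constVAdd ℝ E x₀).toAffineMap.comp (LinearMap.ker φ).subtype.toAffineMap
  obtain ⟨f, hf, hmin⟩ := ih _ hrank (g := g ∘ A) (fun _ => hbot _)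
    (convex_epigraph_comp_affineMap hconv A) (x₀ := 0) (by simpa [A] using hx₀) rfl
  refine ⟨extendFromKer φ f, isLinExt_extendFromKer hf,
    add_extendFromKer_sub_le (fun k => ?_) hdom⟩
  simpa [A] using hmin k

end FiniteDimensional

theorem stmt_9 (d : ℕ) (g : (Fin d → ℝ) → EReal) (hbot : ∀ x, g x ≠ ⊥)
    (hconv : Convex ℝ {p : (Fin d → ℝ) × ℝ | g p.1 ≤ (p.2 : EReal)}) :
    ∀ x₀ : Fin d → ℝ, g x₀ ≠ ⊤ →
      ∃ f : (Fin d → ℝ) → EReal, IsLinExt f ∧ ∀ x, g x₀ + f (x - x₀) ≤ g x :=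
  fun _ hx₀ => exists_isLinExt_minorant hbot hconv hx₀
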